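/- arXiv:1211.5220 — 2 statements merged into one kernel-verified Lean document; each statement's English description precedes it below -/
import Mathlib

section
/- Let (S, 𝒜, P) be a probability space, d ≥ 1, and X : S → ℝ^d a measurable random vector with E‖X‖² < ∞. Let β ∈ ℝ^d, let m ⊆ 𝒜 be the σ-algebra generated by the real random variable βᵀX (the comap of the Borel σ-algebra under ω ↦ βᵀX(ω)), and let h = E[X | m] be the (vector-valued) conditional expectation of X given m. Let w : ℝ → ℝ be a bounded nonnegative Borel function, and define the d×d matrix Ω = E[ (X Xᵀ − h hᵀ) · w(βᵀX) ] (entrywise expectations, which exist under the stated assumptions). Then βᵀΩβ = 0; equivalently, the matrix Ω degenerates in the direction of β for the quadratic form. (This rests on the identity βᵀh = βᵀX almost surely.) -/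
/-!
Expanding the quadratic form under the integral gives
`βᵀΩβ = E[((βᵀX)² - (βᵀh)²) w(βᵀX)]`. Conditional expectation commutes with the linear
functional `βᵀ`, so `βᵀh = E[βᵀX | σ(βᵀX)] = βᵀX` almost surely and the integrand vanishes.
-/

open MeasureTheory Matrix

theorem dotProduct_mulVec_sub_vecMulVec_self {ι α : Type*} [Fintype ι] [CommRing α]
    (a b v : ι → α) (c : α) :
    v ⬝ᵥ (fun i j => (a i * a j - b i * b j) * c : Matrix ι ι α) *ᵥ v
      = ((v ⬝ᵥ a) ^ 2 - (v ⬝ᵥ b) ^ 2) * c := by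
  have hM : (fun i j => (a i * a j - b i * b j) * c : Matrix ι ι α)
      = c • (vecMulVec a a - vecMulVec b b) := by
    ext i j
    simp only [Matrix.smul_apply, Matrix.sub_apply, vecMulVec_apply, smul_eq_mul]
    ring
  rw [hM, smul_mulVec, dotProduct_smul, sub_mulVec, dotProduct_sub, vecMulVec_mulVec,
    vecMulVec_mulVec]
  simp only [op_smul_eq_smul, dotProduct_comm v, smul_dotProduct, smul_eq_mul]
  ring

theorem dotProduct_mulVec_eq_integral {ι S : Type*} [Fintype ι] [MeasurableSpace S]
    {P : Measure S} {F : S → Matrix ι ι ℝ} (hF : ∀ i j, Integrable (fun ω => F ω i j) P)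
    {Ω : Matrix ι ι ℝ} (hΩ : ∀ i j, Ω i j = ∫ ω, F ω i j ∂P) (v : ι → ℝ) :
    v ⬝ᵥ Ω *ᵥ v = ∫ ω, v ⬝ᵥ F ω *ᵥ v ∂P := by
  simp only [dotProduct, mulVec, hΩ, Finset.mul_sum]
  rw [integral_finsetSum _ fun i _ => integrable_finsetSum _ fun j _ =>
    ((hF i j).mul_const _).const_mul _]
  refine Finset.sum_congr rfl fun i _ => ?_
  rw [integral_finsetSum _ fun j _ => ((hF i j).mul_const _).const_mul _]
  simp only [integral_const_mul, integral_mul_const]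

theorem MeasureTheory.MemLp.integrable_apply_mul_apply {ι S : Type*} [Fintype ι]
    [MeasurableSpace S] {P : Measure S} {X : S → EuclideanSpace ℝ ι} (hX : MemLp X 2 P)
    (i j : ι) : Integrable (fun ω => X ω i * X ω j) P := by
  have hXi : MemLp (fun ω => X ω i) 2 P :=
    hX.continuousLinearMap_comp (EuclideanSpace.proj (𝕜 := ℝ) i)
  have hXj : MemLp (fun ω => X ω j) 2 P :=
    hX.continuousLinearMap_comp (EuclideanSpace.proj (𝕜 := ℝ) j)
  exact hXi.integrable_mul hXj

theorem ContinuousLinearMap.comp_condExp_comap_eq {S E : Type*} [NormedAddCommGroup E]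
    [NormedSpace ℝ E] [CompleteSpace E] [MeasurableSpace S] {P : Measure S} [IsFiniteMeasure P]
    {X : S → E} (hX : Integrable X P) (L : E →L[ℝ] ℝ) (hLX : Measurable fun ω => L (X ω)) :
    (fun ω => L (P[X | MeasurableSpace.comap (fun ω => L (X ω)) inferInstance] ω))
      =ᵐ[P] fun ω => L (X ω) := by
  refine (L.comp_condExp_comm hX).trans ?_
  change P[fun ω => L (X ω) | _] =ᵐ[P] _
  rw [condExp_of_stronglyMeasurable hLX.comap_le (comap_measurable _).stronglyMeasurable
    (L.integrable_comp hX)]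

/-- Let (S, 𝒜, P) be a probability space and X : S → ℝ^d measurable with
E‖X‖² < ∞. Let β ∈ ℝ^d, let m be the σ-algebra generated by βᵀX, and h = E[X | m].
Let w be a bounded nonnegative Borel function and
Ω = E[(XXᵀ − hhᵀ)·w(βᵀX)] (entrywise). Then βᵀΩβ = 0. -/
theorem stmt_3 (d : ℕ) (hd : 1 ≤ d) {S : Type} [MeasurableSpace S]
    (P : Measure S) [IsProbabilityMeasure P]
    (X : S → EuclideanSpace ℝ (Fin d)) (hX : Measurable X)
    (hX2 : Integrable (fun ω => ‖X ω‖ ^ 2) P)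
    (β : EuclideanSpace ℝ (Fin d))
    (w : ℝ → ℝ) (hw : Measurable w) (C : ℝ)
    (hw0 : ∀ t, 0 ≤ w t) (hwC : ∀ t, w t ≤ C)
    (m : MeasurableSpace S)
    (hm : m = MeasurableSpace.comap (fun ω => ∑ i, β i * X ω i)
      (inferInstance : MeasurableSpace ℝ))
    (h : S → EuclideanSpace ℝ (Fin d)) (hh : h = P[X | m])
    (Ω : Matrix (Fin d) (Fin d) ℝ)
    (hΩ : ∀ i j, Ω i j =
      ∫ ω, (X ω i * X ω j - h ω i * h ω j) * w (∑ k, β k * X ω k) ∂P) :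
    (fun i => β i) ⬝ᵥ Ω.mulVec (fun i => β i) = 0 := by
  -- while `m` is a local variable it would be picked up as the instance on `S`
  subst hm
  have hβ : ∀ x : EuclideanSpace ℝ (Fin d), ∑ i, β i * x i = innerSL ℝ β x := fun x => by
    simp [PiLp.inner_apply, mul_comm]
  have hβX_meas : Measurable fun ω => ∑ i, β i * X ω i := by simp only [hβ]; fun_prop
  have hXL2 : MemLp X 2 P := (memLp_two_iff_integrable_sq_norm hX.aestronglyMeasurable).2 hX2
  have hβh : ∀ᵐ ω ∂P, ∑ i, β i * h ω i = ∑ i, β i * X ω i := by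
    simp only [hβ] at hh hβX_meas ⊢
    exact hh ▸ (innerSL ℝ β).comp_condExp_comap_eq (hXL2.integrable one_le_two) hβX_meas
  have hint : ∀ i j, Integrable
      (fun ω => (X ω i * X ω j - h ω i * h ω j) * w (∑ k, β k * X ω k)) P := fun i j =>
    ((hXL2.integrable_apply_mul_apply i j).sub
      ((hh ▸ hXL2.condExp one_le_two).integrable_apply_mul_apply i j)).mul_bdd
      (hw.comp hβX_meas).aestronglyMeasurable
      (.of_forall fun ω => (Real.norm_of_nonneg (hw0 _)).trans_le (hwC _))
  rw [dotProduct_mulVec_eq_integral hint hΩ]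
  refine integral_eq_zero_of_ae ?_
  filter_upwards [hβh] with ω hω
  rw [dotProduct_mulVec_sub_vecMulVec_self]
  simp only [dotProduct, hω, sub_self, zero_mul, Pi.zero_apply]
end

section
/- Let d ≥ 2, let β ∈ Θ (so ‖β‖ = 1 and β₁ > 0), and let J = J(β) be the Jacobian matrix. Let Ω be a d×d real symmetric positive semidefinite matrix with Ωβ = 0 and rank(Ω) = d−1. Then JᵀΩJ is invertible, and the matrix A = J (JᵀΩJ)^{−1} Jᵀ is the Moore–Penrose inverse of Ω; that is, A satisfies the four Penrose conditions ΩAΩ = Ω, AΩA = A, (AΩ)ᵀ = AΩ, and (ΩA)ᵀ = ΩA. In particular, in this case the asymptotic covariance J(JᵀΩJ)^{+}Jᵀ of the EFM estimator equals Ω^{+}, the asymptotic covariance of the estimator of Carroll et al. -/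
open Matrix

/-- The Jacobian `J = ∂β/∂β^{(1)}`: the d×(d−1) matrix (with d = m+1, rows indexed by
`Unit ⊕ Fin m`) whose first row is `−β^{(1)ᵀ}/β₁` and whose remaining rows form `I_{d−1}`. -/
noncomputable def Jmat (m : ℕ) (β : EuclideanSpace ℝ (Unit ⊕ Fin m)) :
    Matrix (Unit ⊕ Fin m) (Fin m) ℝ :=
  Matrix.of (Sum.elim (fun _ j => -β (Sum.inr j) / β (Sum.inl ()))
    (fun i j => if i = j then 1 else 0))



lemma isUnit_det_of_rank_eq_card {n : Type*} [Fintype n] [DecidableEq n]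
    (A : Matrix n n ℝ) (h : A.rank = Fintype.card n) : IsUnit A.det := by
  rw [← Matrix.isUnit_iff_isUnit_det, ← Matrix.mulVec_surjective_iff_isUnit]
  have hr : LinearMap.range A.mulVecLin = ⊤ := by
    apply Submodule.eq_top_of_finrank_eq
    rw [show Module.finrank ℝ (LinearMap.range A.mulVecLin) = A.rank from rfl, h,
      Module.finrank_pi]
  intro v
  obtain ⟨x, hx⟩ := LinearMap.range_eq_top.mp hr v
  exact ⟨x, hx⟩

lemma factor_through_J {m : ℕ} {n : Type*} [Fintype n]
    (β : EuclideanSpace ℝ (Unit ⊕ Fin m)) (hβ1 : β (Sum.inl ()) ≠ 0)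
    (B : Matrix (Unit ⊕ Fin m) n ℝ)
    (hB : ∀ k, ∑ i, β i * B i k = 0) :
    B = Jmat m β * B.submatrix Sum.inr id := by
  ext i k
  rcases i with u | j
  · have h := hB k
    rw [Fintype.sum_sum_type] at h
    simp only [Finset.univ_unique, Finset.sum_singleton] at h
    have hBl : B (Sum.inl ()) k
        = -(∑ j : Fin m, β (Sum.inr j) * B (Sum.inr j) k) / β (Sum.inl ()) := by
      field_simp
      linarith [h]
    simp only [Matrix.mul_apply, Jmat, Matrix.of_apply, Sum.elim_inl, Matrix.submatrix_apply,
      id_eq]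
    cases u
    rw [hBl]
    rw [show ∑ j : Fin m, -β (Sum.inr j) / β (Sum.inl ()) * B (Sum.inr j) k
        = ∑ j : Fin m, -(β (Sum.inr j) * B (Sum.inr j) k) / β (Sum.inl ()) from
      Finset.sum_congr rfl (fun j _ => by ring)]
    rw [← Finset.sum_div, ← Finset.sum_neg_distrib]
  · simp only [Matrix.mul_apply, Jmat, Matrix.of_apply, Sum.elim_inr, Matrix.submatrix_apply,
      id_eq, ite_mul, one_mul, zero_mul]
    rw [Finset.sum_ite_eq]
    simp

lemma penrose_aux {d n : Type*} [Fintype d] [Fintype n] [DecidableEq n]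
    (J : Matrix d n ℝ) (L : Matrix n n ℝ) (hLdet : IsUnit L.det)
    (hGdet : IsUnit (Jᵀ * J).det) (hLsym : Lᵀ = L) :
    IsUnit (Jᵀ * (J * L * Jᵀ) * J).det ∧
      ∀ A : Matrix d d ℝ, A = J * (Jᵀ * (J * L * Jᵀ) * J)⁻¹ * Jᵀ →
        (J * L * Jᵀ) * A * (J * L * Jᵀ) = (J * L * Jᵀ) ∧
        A * (J * L * Jᵀ) * A = A ∧
        (A * (J * L * Jᵀ))ᵀ = A * (J * L * Jᵀ) ∧
        ((J * L * Jᵀ) * A)ᵀ = (J * L * Jᵀ) * A := by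
  set G := Jᵀ * J with hGdef
  have hM : Jᵀ * (J * L * Jᵀ) * J = G * L * G := by
    simp only [hGdef, Matrix.mul_assoc]
  have hMdet : IsUnit (Jᵀ * (J * L * Jᵀ) * J).det := by
    rw [hM, Matrix.det_mul, Matrix.det_mul]
    exact (hGdet.mul hLdet).mul hGdet
  refine ⟨hMdet, fun A hA => ?_⟩
  have hGL : IsUnit (G * L).det := by rw [Matrix.det_mul]; exact hGdet.mul hLdet
  have hMinv : (Jᵀ * (J * L * Jᵀ) * J)⁻¹ = G⁻¹ * L⁻¹ * G⁻¹ := by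
    rw [hM, Matrix.mul_inv_rev, Matrix.mul_inv_rev, Matrix.mul_assoc]
  have hA' : A = J * (G⁻¹ * L⁻¹ * G⁻¹) * Jᵀ := by rw [hA, hMinv]
  -- key : A * Ω = Ω * A = J * G⁻¹ * Jᵀ
  have hAΩ : A * (J * L * Jᵀ) = J * G⁻¹ * Jᵀ := by
    rw [hA']
    calc J * (G⁻¹ * L⁻¹ * G⁻¹) * Jᵀ * (J * L * Jᵀ)
        = J * (G⁻¹ * (L⁻¹ * (G⁻¹ * (G * (L * Jᵀ))))) := by
          simp only [hGdef, Matrix.mul_assoc]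
      _ = J * G⁻¹ * Jᵀ := by
          rw [Matrix.nonsing_inv_mul_cancel_left _ _ hGdet,
            Matrix.nonsing_inv_mul_cancel_left _ _ hLdet, Matrix.mul_assoc]
  have hΩA : (J * L * Jᵀ) * A = J * G⁻¹ * Jᵀ := by
    rw [hA']
    calc (J * L * Jᵀ) * (J * (G⁻¹ * L⁻¹ * G⁻¹) * Jᵀ)
        = J * (L * (G * (G⁻¹ * (L⁻¹ * (G⁻¹ * Jᵀ))))) := by
          simp only [hGdef, Matrix.mul_assoc]
      _ = J * (L * (L⁻¹ * (G⁻¹ * Jᵀ))) := by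
          rw [Matrix.mul_nonsing_inv_cancel_left _ _ hGdet]
      _ = J * G⁻¹ * Jᵀ := by
          rw [Matrix.mul_nonsing_inv_cancel_left _ _ hLdet, Matrix.mul_assoc]
  have hGsym : Gᵀ = G := by
    rw [hGdef, Matrix.transpose_mul, Matrix.transpose_transpose]
  have hGinvsym : (G⁻¹)ᵀ = G⁻¹ := by
    rw [Matrix.transpose_nonsing_inv, hGsym]
  constructor
  · -- Ω * A * Ω = Ω
    rw [hΩA]
    calc J * G⁻¹ * Jᵀ * (J * L * Jᵀ)
        = J * (G⁻¹ * (G * (L * Jᵀ))) := by simp only [hGdef, Matrix.mul_assoc]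
      _ = J * L * Jᵀ := by
          rw [Matrix.nonsing_inv_mul_cancel_left _ _ hGdet, ← Matrix.mul_assoc]
  refine ⟨?_, ?_, ?_⟩
  · -- A * Ω * A = A
    rw [hAΩ, hA']
    calc J * G⁻¹ * Jᵀ * (J * (G⁻¹ * L⁻¹ * G⁻¹) * Jᵀ)
        = J * (G⁻¹ * (G * (G⁻¹ * (L⁻¹ * (G⁻¹ * Jᵀ))))) := by
          simp only [hGdef, Matrix.mul_assoc]
      _ = J * (G⁻¹ * (L⁻¹ * (G⁻¹ * Jᵀ))) := by
          rw [Matrix.nonsing_inv_mul_cancel_left _ _ hGdet]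
      _ = J * (G⁻¹ * L⁻¹ * G⁻¹) * Jᵀ := by simp only [Matrix.mul_assoc]
  · rw [hAΩ]
    rw [Matrix.transpose_mul, Matrix.transpose_mul, Matrix.transpose_transpose, hGinvsym,
      Matrix.mul_assoc]
  · rw [hΩA]
    rw [Matrix.transpose_mul, Matrix.transpose_mul, Matrix.transpose_transpose, hGinvsym,
      Matrix.mul_assoc]

/-- For β ∈ Θ with Jacobian J, and Ω a d×d real symmetric positive
semidefinite matrix with Ωβ = 0 and rank(Ω) = d − 1, the matrix JᵀΩJ is invertible and
A = J(JᵀΩJ)⁻¹Jᵀ is the Moore–Penrose inverse of Ω, i.e. A satisfies the four Penrose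
conditions; in particular J(JᵀΩJ)⁺Jᵀ = Ω⁺. -/
theorem stmt_7 (m : ℕ) (hm : 1 ≤ m) (β : EuclideanSpace ℝ (Unit ⊕ Fin m))
    (hβ : ‖β‖ = 1) (hβ1 : 0 < β (Sum.inl ()))
    (Ω : Matrix (Unit ⊕ Fin m) (Unit ⊕ Fin m) ℝ)
    (hpsd : Ω.PosSemidef) (hker : Ω.mulVec (fun i => β i) = 0)
    (hrank : Ω.rank = m) :
    IsUnit ((Jmat m β)ᵀ * Ω * Jmat m β).det ∧
    ∀ A : Matrix (Unit ⊕ Fin m) (Unit ⊕ Fin m) ℝ,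
      A = Jmat m β * ((Jmat m β)ᵀ * Ω * Jmat m β)⁻¹ * (Jmat m β)ᵀ →
      Ω * A * Ω = Ω ∧ A * Ω * A = A ∧ (A * Ω)ᵀ = A * Ω ∧ (Ω * A)ᵀ = Ω * A := by
  have hβ1' : β (Sum.inl ()) ≠ 0 := ne_of_gt hβ1
  set J := Jmat m β with hJdef
  have hsym : ∀ i j, Ω i j = Ω j i := by
    intro i j
    have := hpsd.1.apply j i
    simpa using this
  have hcol : ∀ k, ∑ i, β i * Ω i k = 0 := by
    intro k
    have h := congrFun hker k
    simp only [Matrix.mulVec, dotProduct, Pi.zero_apply] at h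
    rw [← h]
    apply Finset.sum_congr rfl
    intro i _
    rw [hsym i k, mul_comm]
  -- Ω = J * K
  have hΩK : Ω = J * Ω.submatrix Sum.inr id := factor_through_J β hβ1' Ω hcol
  -- Kᵀ = J * L
  set L := Ω.submatrix Sum.inr Sum.inr with hLdef
  have hKt : (Ω.submatrix Sum.inr id)ᵀ = J * L := by
    have h2 : ∀ k, ∑ i, β i * (Ω.submatrix Sum.inr id)ᵀ i k = 0 := by
      intro k
      have := hcol (Sum.inr k)
      rw [← this]
      apply Finset.sum_congr rfl
      intro i _
      rw [Matrix.transpose_apply, Matrix.submatrix_apply, id_eq, hsym i (Sum.inr k)]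
    have := factor_through_J β hβ1' (Ω.submatrix Sum.inr id)ᵀ h2
    rw [this]
    congr 1
    ext i j
    simp only [Matrix.submatrix_apply, Matrix.transpose_apply, id_eq, hLdef]
    exact hsym (Sum.inr j) (Sum.inr i)
  have hLsym : Lᵀ = L := by
    ext i j
    simp only [Matrix.transpose_apply, hLdef, Matrix.submatrix_apply]
    exact hsym (Sum.inr j) (Sum.inr i)
  have hΩ : Ω = J * L * Jᵀ := by
    rw [hΩK]
    nth_rewrite 1 [show Ω.submatrix Sum.inr id = ((Ω.submatrix Sum.inr id)ᵀ)ᵀ from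
      (Matrix.transpose_transpose _).symm]
    rw [hKt, Matrix.transpose_mul, hLsym, ← Matrix.mul_assoc]
  -- J has a left inverse, hence rank m
  set S : Matrix (Fin m) (Unit ⊕ Fin m) ℝ :=
    Matrix.of (fun i j => if j = Sum.inr i then (1 : ℝ) else 0) with hSdef
  have hSJ : S * J = 1 := by
    ext i j
    simp only [Matrix.mul_apply, hSdef, Matrix.of_apply, ite_mul, one_mul, zero_mul]
    rw [Fintype.sum_sum_type]
    simp only [Finset.univ_unique, Finset.sum_singleton]
    simp [hJdef, Jmat, Matrix.one_apply, Finset.sum_ite_eq]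
  have hJrank : J.rank = m := by
    apply le_antisymm
    · simpa using J.rank_le_card_width
    · have h1 : (S * J).rank ≤ J.rank := Matrix.rank_mul_le_right S J
      rw [hSJ] at h1
      simpa [Matrix.rank_one] using h1
  have hGdet : IsUnit (Jᵀ * J).det := by
    apply isUnit_det_of_rank_eq_card
    rw [Matrix.rank_transpose_mul_self, hJrank]
    simp
  have hLdet : IsUnit L.det := by
    apply isUnit_det_of_rank_eq_card
    apply le_antisymm
    · simpa using L.rank_le_card_width
    · have h1 : Ω.rank ≤ (L * Jᵀ).rank := by
        rw [hΩ, Matrix.mul_assoc]; exact Matrix.rank_mul_le_right _ _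
      have h2 : (L * Jᵀ).rank ≤ L.rank := Matrix.rank_mul_le_left _ _
      simp only [Fintype.card_fin]
      omega
  have main := penrose_aux J L hLdet hGdet hLsym
  rw [← hΩ] at main
  exact main
end
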